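/- arXiv:2508.11652 — 2 statements merged into one kernel-verified Lean document; each statement's English description precedes it below -/
import Mathlib

section
/- Suppose g : ℕ³ → ℝ satisfies |g(n,k,m)| ≤ K/(1 + n^p + k^p + m^p) for some K > 0 and p > 2, and (a_k) ∈ ℓ²(ℕ). Then for each n, the double series ∑_{k,m} g(n,k,m)·a_k·a_m converges absolutely, and ∑_n (∑_{k,m} g(n,k,m) a_k a_m)² < ∞; i.e., the nonlinear map G(a)_n = ∑_{k,m} g(n,k,m) a_k a_m sends ℓ² to ℓ² with ‖G(a)‖_{ℓ²} ≤ K'·‖a‖_{ℓ²}² for some constant K' depending only on K and p. -/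
open Real

section Aux

variable {p : ℝ}

/-- The weight `w n = (1 + n^p)^(-1/3)` (as an inverse of an rpow). -/
noncomputable def stmt12w (p : ℝ) (n : ℕ) : ℝ := ((1 + (n : ℝ) ^ p) ^ (3⁻¹ : ℝ))⁻¹

lemma stmt12D_pos (p : ℝ) (n : ℕ) : 0 < 1 + (n : ℝ) ^ p := by
  have := Real.rpow_nonneg (Nat.cast_nonneg n) p
  linarith

lemma stmt12w_pos (p : ℝ) (n : ℕ) : 0 < stmt12w p n :=
  inv_pos.mpr (Real.rpow_pos_of_pos (stmt12D_pos p n) _)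

lemma stmt12w_sq (p : ℝ) (n : ℕ) :
    stmt12w p n ^ 2 = ((1 + (n : ℝ) ^ p) ^ (2 / 3 : ℝ))⁻¹ := by
  rw [stmt12w, inv_pow, ← Real.rpow_natCast ((1 + (n : ℝ) ^ p) ^ (3⁻¹ : ℝ)) 2,
    ← Real.rpow_mul (stmt12D_pos p n).le]
  norm_num

lemma stmt12w_sq_summable (hp : 2 < p) : Summable fun n : ℕ => stmt12w p n ^ 2 := by
  have hq1 : (1 : ℝ) < 2 * p / 3 := by linarith
  have hq0 : (0 : ℝ) < 2 * p / 3 := by linarith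
  have hbase : Summable fun n : ℕ => ((n : ℝ) ^ (2 * p / 3 : ℝ))⁻¹ := by
    simpa [one_div] using Real.summable_one_div_nat_rpow.mpr hq1
  rw [← summable_nat_add_iff 1]
  refine Summable.of_nonneg_of_le (fun n => sq_nonneg _) (fun n => ?_)
    ((summable_nat_add_iff 1).mpr hbase)
  have hp0 : (0 : ℝ) < p := by linarith
  have hn1 : (1 : ℝ) ≤ ((n + 1 : ℕ) : ℝ) := by exact_mod_cast Nat.one_le_iff_ne_zero.mpr (by simp)
  have hn0 : (0 : ℝ) ≤ ((n + 1 : ℕ) : ℝ) := by linarith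
  rw [stmt12w_sq]
  have h1 : ((n + 1 : ℕ) : ℝ) ^ (2 * p / 3 : ℝ) ≤ (1 + ((n + 1 : ℕ) : ℝ) ^ p) ^ (2 / 3 : ℝ) := by
    have : ((n + 1 : ℕ) : ℝ) ^ (2 * p / 3 : ℝ) = (((n + 1 : ℕ) : ℝ) ^ p) ^ (2 / 3 : ℝ) := by
      rw [← Real.rpow_mul hn0]; ring_nf
    rw [this]
    refine Real.rpow_le_rpow (Real.rpow_nonneg hn0 _) (by linarith [stmt12D_pos p (n + 1)]) ?_
    · norm_num
  exact inv_anti₀ (Real.rpow_pos_of_pos (lt_of_lt_of_le one_pos hn1) _) h1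

end Aux

/-- If `|g(n,k,m)| ≤ K/(1+n^p+k^p+m^p)` with `p > 2` and `a ∈ ℓ²`, then each double series
`∑_{k,m} g(n,k,m) a_k a_m` converges absolutely and the map `G` sends `ℓ²` to `ℓ²` with
`‖G(a)‖ ≤ K' ‖a‖²`, where `K'` depends only on `K` and `p`. -/
theorem stmt12 (K p : ℝ) (hK : 0 < K) (hp : 2 < p) :
    ∃ K' : ℝ, 0 < K' ∧
      ∀ (g : ℕ → ℕ → ℕ → ℝ) (a : ℕ → ℝ),
        (∀ n k m : ℕ, |g n k m| ≤ K / (1 + (n : ℝ) ^ p + (k : ℝ) ^ p + (m : ℝ) ^ p)) →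
        Summable (fun k => (a k) ^ 2) →
        (∀ n : ℕ, Summable (fun km : ℕ × ℕ => |g n km.1 km.2 * a km.1 * a km.2|)) ∧
        Summable (fun n => (∑' km : ℕ × ℕ, g n km.1 km.2 * a km.1 * a km.2) ^ 2) ∧
        Real.sqrt (∑' n, (∑' km : ℕ × ℕ, g n km.1 km.2 * a km.1 * a km.2) ^ 2) ≤
          K' * (∑' k, (a k) ^ 2) := by
  classical
  set w : ℕ → ℝ := stmt12w p with hw
  have hw0 : ∀ n, 0 < w n := stmt12w_pos p
  have hWsum : Summable fun n : ℕ => w n ^ 2 := stmt12w_sq_summable hp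
  set W : ℝ := ∑' n, w n ^ 2 with hWdef
  have hW0 : 0 < W := Summable.tsum_pos hWsum (fun n => sq_nonneg _) 0 (pow_pos (hw0 0) 2)
  refine ⟨K * Real.sqrt W * W, by positivity, ?_⟩
  intro g a hg hA
  set A : ℝ := ∑' k, (a k) ^ 2 with hAdef
  have hA0 : 0 ≤ A := tsum_nonneg fun k => sq_nonneg _
  -- pointwise bound on g
  have hgb : ∀ n k m, |g n k m| ≤ K * (w n * w k * w m) := by
    intro n k m
    have hDn := stmt12D_pos p n
    have hD3 : (0 : ℝ) < 1 + (n : ℝ) ^ p + (k : ℝ) ^ p + (m : ℝ) ^ p := by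
      have h1 := Real.rpow_nonneg (Nat.cast_nonneg k) p
      have h2 := Real.rpow_nonneg (Nat.cast_nonneg m) p
      linarith
    set D3 : ℝ := 1 + (n : ℝ) ^ p + (k : ℝ) ^ p + (m : ℝ) ^ p with hD3def
    have hX : (1 + (n : ℝ) ^ p) ^ (3⁻¹ : ℝ) * (1 + (k : ℝ) ^ p) ^ (3⁻¹ : ℝ) *
        (1 + (m : ℝ) ^ p) ^ (3⁻¹ : ℝ) ≤ D3 := by
      have hle : ∀ x : ℕ, 1 + (x : ℝ) ^ p ≤ D3 → (1 + (x : ℝ) ^ p) ^ (3⁻¹ : ℝ) ≤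
          D3 ^ (3⁻¹ : ℝ) := fun x hx => Real.rpow_le_rpow (stmt12D_pos p x).le hx (by norm_num)
      have h1 := Real.rpow_nonneg (Nat.cast_nonneg n) p
      have h2 := Real.rpow_nonneg (Nat.cast_nonneg k) p
      have h3 := Real.rpow_nonneg (Nat.cast_nonneg m) p
      have hn' := hle n (by rw [hD3def]; linarith)
      have hk' := hle k (by rw [hD3def]; linarith)
      have hm' := hle m (by rw [hD3def]; linarith)
      have hD3r : (0 : ℝ) ≤ D3 ^ (3⁻¹ : ℝ) := Real.rpow_nonneg hD3.le _
      calc (1 + (n : ℝ) ^ p) ^ (3⁻¹ : ℝ) * (1 + (k : ℝ) ^ p) ^ (3⁻¹ : ℝ) *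
            (1 + (m : ℝ) ^ p) ^ (3⁻¹ : ℝ)
          ≤ D3 ^ (3⁻¹ : ℝ) * D3 ^ (3⁻¹ : ℝ) * D3 ^ (3⁻¹ : ℝ) := by
            apply mul_le_mul (mul_le_mul hn' hk' (Real.rpow_nonneg (stmt12D_pos p k).le _)
              hD3r) hm' (Real.rpow_nonneg (stmt12D_pos p m).le _) (by positivity)
        _ = D3 ^ ((3⁻¹ : ℝ) + 3⁻¹ + 3⁻¹) := by
            rw [← Real.rpow_add hD3, ← Real.rpow_add hD3]
        _ = D3 := by norm_num
    have hXpos : (0 : ℝ) < (1 + (n : ℝ) ^ p) ^ (3⁻¹ : ℝ) * (1 + (k : ℝ) ^ p) ^ (3⁻¹ : ℝ) *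
        (1 + (m : ℝ) ^ p) ^ (3⁻¹ : ℝ) := by
      have := Real.rpow_pos_of_pos (stmt12D_pos p n) (3⁻¹ : ℝ)
      have := Real.rpow_pos_of_pos (stmt12D_pos p k) (3⁻¹ : ℝ)
      have := Real.rpow_pos_of_pos (stmt12D_pos p m) (3⁻¹ : ℝ)
      positivity
    calc |g n k m| ≤ K / D3 := hg n k m
      _ ≤ K / ((1 + (n : ℝ) ^ p) ^ (3⁻¹ : ℝ) * (1 + (k : ℝ) ^ p) ^ (3⁻¹ : ℝ) *
            (1 + (m : ℝ) ^ p) ^ (3⁻¹ : ℝ)) := div_le_div_of_nonneg_left hK.le hXpos hX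
      _ = K * (w n * w k * w m) := by
          rw [hw, div_eq_mul_inv, stmt12w, stmt12w, stmt12w, ← mul_inv, ← mul_inv]
  -- weighted sequence b and Cauchy-Schwarz
  set b : ℕ → ℝ := fun k => w k * |a k| with hb
  have hb0 : ∀ k, 0 ≤ b k := fun k => mul_nonneg (hw0 k).le (abs_nonneg _)
  have hbsum : Summable b := by
    refine Summable.of_nonneg_of_le hb0 (fun k => ?_) ((hWsum.add hA).div_const 2)
    have h := sq_nonneg (w k - |a k|)
    have : w k * |a k| ≤ (w k ^ 2 + |a k| ^ 2) / 2 := by nlinarith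
    simpa [sq_abs] using this
  set S : ℝ := ∑' k, b k with hS
  have hS0 : 0 ≤ S := tsum_nonneg hb0
  have hS2 : S ^ 2 ≤ W * A := by
    have hSle : S ≤ Real.sqrt (W * A) := by
      refine Summable.tsum_le_of_sum_le hbsum fun s => ?_
      have hcs := Finset.sum_mul_sq_le_sq_mul_sq s w fun k => |a k|
      have h1 : ∑ k ∈ s, w k ^ 2 ≤ W := Summable.sum_le_tsum s (fun k _ => sq_nonneg _) hWsum
      have h2 : ∑ k ∈ s, |a k| ^ 2 ≤ A := by
        simpa [sq_abs] using Summable.sum_le_tsum s (fun k (_ : k ∉ s) => sq_nonneg (a k)) hA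
      have hsum0 : 0 ≤ ∑ k ∈ s, b k := Finset.sum_nonneg fun k _ => hb0 k
      have : (∑ k ∈ s, b k) ^ 2 ≤ W * A := by
        refine le_trans hcs (mul_le_mul h1 h2 (Finset.sum_nonneg fun k _ => sq_nonneg _)
          (le_trans (Finset.sum_nonneg fun k _ => sq_nonneg _) h1))
      calc ∑ k ∈ s, b k = Real.sqrt ((∑ k ∈ s, b k) ^ 2) := (Real.sqrt_sq hsum0).symm
        _ ≤ Real.sqrt (W * A) := Real.sqrt_le_sqrt this
    calc S ^ 2 ≤ Real.sqrt (W * A) ^ 2 := by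
          exact pow_le_pow_left₀ hS0 hSle 2
      _ = W * A := Real.sq_sqrt (by positivity)
    -- done
  -- summability of double series
  have hbb : Summable fun km : ℕ × ℕ => b km.1 * b km.2 :=
    hbsum.mul_of_nonneg hbsum hb0 hb0
  have habs : ∀ n : ℕ, Summable fun km : ℕ × ℕ => |g n km.1 km.2 * a km.1 * a km.2| := by
    intro n
    refine Summable.of_nonneg_of_le (fun km => abs_nonneg _) (fun km => ?_)
      ((hbb.mul_left (K * w n)))
    have : |g n km.1 km.2 * a km.1 * a km.2| = |g n km.1 km.2| * |a km.1| * |a km.2| := by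
      rw [abs_mul, abs_mul]
    rw [this]
    have h1 : |g n km.1 km.2| * |a km.1| * |a km.2| ≤
        (K * (w n * w km.1 * w km.2)) * |a km.1| * |a km.2| := by
      apply mul_le_mul_of_nonneg_right (mul_le_mul_of_nonneg_right (hgb n km.1 km.2)
        (abs_nonneg _)) (abs_nonneg _)
    refine h1.trans_eq ?_
    simp only [hb]
    ring
  have hbbsum : ∑' km : ℕ × ℕ, b km.1 * b km.2 = S * S := by
    rw [hS, tsum_mul_tsum_of_summable_norm (by simpa [abs_of_nonneg (hb0 _)] using hbsum)
      (by simpa [abs_of_nonneg (hb0 _)] using hbsum)]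
  -- bound on each G n
  have hGb : ∀ n : ℕ, |∑' km : ℕ × ℕ, g n km.1 km.2 * a km.1 * a km.2| ≤ K * w n * S ^ 2 := by
    intro n
    have h1 : |∑' km : ℕ × ℕ, g n km.1 km.2 * a km.1 * a km.2| ≤
        ∑' km : ℕ × ℕ, |g n km.1 km.2 * a km.1 * a km.2| := by
      simpa only [Real.norm_eq_abs] using norm_tsum_le_tsum_norm (f := fun km : ℕ × ℕ =>
        g n km.1 km.2 * a km.1 * a km.2) (by simpa only [Real.norm_eq_abs] using habs n)
    refine h1.trans ?_
    have h2 : ∑' km : ℕ × ℕ, |g n km.1 km.2 * a km.1 * a km.2| ≤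
        ∑' km : ℕ × ℕ, (K * w n) * (b km.1 * b km.2) := by
      refine Summable.tsum_le_tsum (fun km => ?_) (habs n) (hbb.mul_left _)
      have : |g n km.1 km.2 * a km.1 * a km.2| = |g n km.1 km.2| * |a km.1| * |a km.2| := by
        rw [abs_mul, abs_mul]
      rw [this]
      refine le_trans (mul_le_mul_of_nonneg_right (mul_le_mul_of_nonneg_right (hgb n km.1 km.2)
        (abs_nonneg _)) (abs_nonneg _)) ?_
      simp only [hb]; ring_nf; exact le_refl _
    refine h2.trans_eq ?_
    rw [tsum_mul_left, hbbsum]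
    ring
  have hGsq : ∀ n : ℕ, (∑' km : ℕ × ℕ, g n km.1 km.2 * a km.1 * a km.2) ^ 2 ≤
      (K * S ^ 2) ^ 2 * w n ^ 2 := by
    intro n
    have h0 : 0 ≤ K * w n * S ^ 2 := mul_nonneg (mul_nonneg hK.le (hw0 n).le) (sq_nonneg _)
    have := pow_le_pow_left₀ (abs_nonneg _) (hGb n) 2
    calc (∑' km : ℕ × ℕ, g n km.1 km.2 * a km.1 * a km.2) ^ 2
        = |∑' km : ℕ × ℕ, g n km.1 km.2 * a km.1 * a km.2| ^ 2 := (sq_abs _).symm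
      _ ≤ (K * w n * S ^ 2) ^ 2 := this
      _ = (K * S ^ 2) ^ 2 * w n ^ 2 := by ring
  have hGsum : Summable fun n => (∑' km : ℕ × ℕ, g n km.1 km.2 * a km.1 * a km.2) ^ 2 :=
    Summable.of_nonneg_of_le (fun n => sq_nonneg _) hGsq (hWsum.mul_left _)
  refine ⟨habs, hGsum, ?_⟩
  have hT : ∑' n, (∑' km : ℕ × ℕ, g n km.1 km.2 * a km.1 * a km.2) ^ 2 ≤
      (K * S ^ 2) ^ 2 * W := by
    calc ∑' n, (∑' km : ℕ × ℕ, g n km.1 km.2 * a km.1 * a km.2) ^ 2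
        ≤ ∑' n, (K * S ^ 2) ^ 2 * w n ^ 2 := Summable.tsum_le_tsum hGsq hGsum (hWsum.mul_left _)
      _ = (K * S ^ 2) ^ 2 * W := by rw [tsum_mul_left]
  calc Real.sqrt (∑' n, (∑' km : ℕ × ℕ, g n km.1 km.2 * a km.1 * a km.2) ^ 2)
      ≤ Real.sqrt ((K * S ^ 2) ^ 2 * W) := Real.sqrt_le_sqrt hT
    _ = (K * S ^ 2) * Real.sqrt W := by
        rw [Real.sqrt_mul (sq_nonneg _), Real.sqrt_sq (by positivity)]
    _ ≤ (K * (W * A)) * Real.sqrt W := by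
        apply mul_le_mul_of_nonneg_right (mul_le_mul_of_nonneg_left hS2 hK.le)
          (Real.sqrt_nonneg _)
    _ = K * Real.sqrt W * W * A := by ring
end

section
/- If a nonnegative differentiable function y : [0,∞) → ℝ satisfies y'(τ) ≤ -2δ·y(τ) + C·y(τ)^{3/2} with δ, C > 0, and y(0) < (δ/C)², then y(τ) ≤ y(0)·exp(-δτ) for all τ ≥ 0. -/
open Real Set Filter
open scoped Topology

/-- Linear Grönwall for differentiable functions: if `deriv y ≤ -δ y` on `[a,b)`,
then `y t ≤ y a * exp (-δ (t - a))` on `[a,b]`. -/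
lemma gronwall_linear (δ : ℝ) (y : ℝ → ℝ) (hy : Differentiable ℝ y) {a b : ℝ}
    (bound : ∀ t ∈ Ico a b, deriv y t ≤ -δ * y t) :
    ∀ t ∈ Icc a b, y t ≤ y a * Real.exp (-δ * (t - a)) := by
  intro t ht
  have H := le_gronwallBound_of_liminf_deriv_right_le (f := y) (f' := deriv y)
    (δ := y a) (K := -δ) (ε := 0) (a := a) (b := b)
    (hy.continuous.continuousOn)
    (fun x _ r hr => by
      have hd : HasDerivAt y (deriv y x) x := (hy x).hasDerivAt
      have h1 : Tendsto (fun z => (z - x)⁻¹ * (y z - y x)) (𝓝[>] x) (𝓝 (deriv y x)) := by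
        have := hd.hasDerivWithinAt (s := Ioi x)
        rw [hasDerivWithinAt_iff_tendsto_slope] at this
        have hsub : 𝓝[Ioi x \ {x}] x = 𝓝[>] x := by
          rw [Set.diff_singleton_eq_self (by simp)]
        simpa [slope_fun_def, vsub_eq_sub, div_eq_inv_mul, hsub] using this
      exact ((h1.eventually (Filter.Tendsto.eventually_lt_const hr (f := id) tendsto_id)).frequently))
    le_rfl
    (fun x hx => by simpa using bound x hx)
    t ht
  rwa [gronwallBound_ε0] at H

/-- Grönwall with subcritical nonlinearity: if `y ≥ 0`, `y' ≤ -2δy + C y^{3/2}`, and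
`y(0) < (δ/C)²`, then `y(τ) ≤ y(0) exp(-δτ)` for all `τ ≥ 0`. -/
theorem stmt13 (δ C : ℝ) (hδ : 0 < δ) (hC : 0 < C)
    (y : ℝ → ℝ) (hy : Differentiable ℝ y) (hpos : ∀ τ, 0 ≤ y τ)
    (hineq : ∀ τ, 0 ≤ τ → deriv y τ ≤ -2 * δ * y τ + C * (y τ) ^ ((3 : ℝ) / 2))
    (h0 : y 0 < (δ / C) ^ 2) :
    ∀ τ, 0 ≤ τ → y τ ≤ y 0 * Real.exp (-δ * τ) := by
  have hδC : 0 < δ / C := div_pos hδ hC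
  -- key pointwise estimate: where y < (δ/C)², deriv y ≤ -δ y
  have key : ∀ t, 0 ≤ t → y t < (δ / C) ^ 2 → deriv y t ≤ -δ * y t := by
    intro t ht hlt
    have hsqrt : Real.sqrt (y t) < δ / C := by
      have := Real.sqrt_lt_sqrt (hpos t) hlt
      rwa [Real.sqrt_sq hδC.le] at this
    have hrpow : (y t) ^ ((3 : ℝ) / 2) = y t * Real.sqrt (y t) := by
      rw [show (3 : ℝ)/2 = 1 + 1/2 by norm_num, Real.rpow_add' (hpos t) (by norm_num),
        Real.rpow_one, Real.sqrt_eq_rpow]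
    have h2 : C * (y t) ^ ((3 : ℝ) / 2) ≤ δ * y t := by
      rw [hrpow]
      calc C * (y t * Real.sqrt (y t)) = (C * Real.sqrt (y t)) * y t := by ring
        _ ≤ (C * (δ / C)) * y t := by
            apply mul_le_mul_of_nonneg_right _ (hpos t)
            exact mul_le_mul_of_nonneg_left hsqrt.le hC.le
        _ = δ * y t := by field_simp
    calc deriv y t ≤ -2 * δ * y t + C * (y t) ^ ((3 : ℝ) / 2) := hineq t ht
      _ ≤ -2 * δ * y t + δ * y t := by linarith
      _ = -δ * y t := by ring
  intro τ hτ
  -- continuous induction on [0, τ]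
  set s : Set ℝ := {t | y t ≤ y 0 * Real.exp (-δ * t)} with hs_def
  have hmem : ∀ t ∈ s, 0 ≤ t → y t < (δ / C) ^ 2 := by
    intro t htm ht0
    have h1 : Real.exp (-δ * t) ≤ 1 := by
      apply Real.exp_le_one_iff.mpr
      nlinarith
    calc y t ≤ y 0 * Real.exp (-δ * t) := htm
      _ ≤ y 0 * 1 := mul_le_mul_of_nonneg_left h1 (hpos 0)
      _ < (δ / C) ^ 2 := by simpa using h0
  have hsub : Icc 0 τ ⊆ s := by
    apply IsClosed.Icc_subset_of_forall_exists_gt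
    · apply IsClosed.inter _ isClosed_Icc
      exact isClosed_le hy.continuous (continuous_const.mul (Real.continuous_exp.comp
        (continuous_const.mul continuous_id)))
    · simp [hs_def]
    · rintro x ⟨hxs, hx0, hxτ⟩ z hz
      -- find small interval where y < (δ/C)²
      have hyx : y x < (δ / C) ^ 2 := hmem x hxs hx0
      have hopen : IsOpen {t | y t < (δ / C) ^ 2} := isOpen_lt hy.continuous continuous_const
      obtain ⟨ε, hε, hball⟩ := Metric.isOpen_iff.mp hopen x hyx
      set b : ℝ := min z (x + ε / 2) with hb_def
      have hxb : x < b := lt_min hz (by linarith)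
      have hsmall : ∀ t ∈ Ico x b, y t < (δ / C) ^ 2 := by
        intro t ⟨ht1, ht2⟩
        apply hball
        rw [Metric.mem_ball, Real.dist_eq, abs_of_nonneg (by linarith)]
        calc t - x < b - x := by linarith
          _ ≤ ε / 2 := by simp [hb_def]; right; linarith
          _ < ε := by linarith
      have hbound : ∀ t ∈ Ico x b, deriv y t ≤ -δ * y t := fun t ht =>
        key t (le_trans hx0 ht.1) (hsmall t ht)
      have := gronwall_linear δ y hy hbound b ⟨hxb.le, le_rfl⟩
      refine ⟨b, ?_, ⟨hxb, min_le_left _ _⟩⟩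
      calc y b ≤ y x * Real.exp (-δ * (b - x)) := this
        _ ≤ (y 0 * Real.exp (-δ * x)) * Real.exp (-δ * (b - x)) :=
            mul_le_mul_of_nonneg_right hxs (Real.exp_nonneg _)
        _ = y 0 * Real.exp (-δ * b) := by rw [mul_assoc, ← Real.exp_add]; ring_nf
  exact hsub ⟨hτ, le_rfl⟩
end
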